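/- Let J > 2 and let M be the dN × dN matrix given by the Kronecker product of the N×N circulant matrix (diagonal J, nearest cyclic neighbors −1) with the d×d identity. Then M is positive definite and det M = (2 T_N(J/2) − 2)^d. -/

import Mathlib

open Matrix
open scoped Kronecker

/-- Chebyshev polynomials of the first kind as real functions:
`T 0 = 1`, `T 1 x = x`, `T (n+1) x = 2x * T n x - T (n-1) x`. -/
def chebT : ℕ → ℝ → ℝ
  | 0, _ => 1
  | 1, x => x
  | n + 2, x => 2 * x * chebT (n + 1) x - chebT n x

/-- The `N × N` symmetric circulant matrix with diagonal entries `J` and entries `-1`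
at cyclically adjacent positions `(i, i ± 1 mod N)`. -/
def circMat (N : ℕ) [NeZero N] (J : ℝ) : Matrix (Fin N) (Fin N) ℝ :=
  fun i j => if i = j then J else if j = i + 1 ∨ i = j + 1 then -1 else 0

/-!
For `ζ ^ N = 1` the vector `(ζ ^ j)ⱼ` is an eigenvector of the circulant with eigenvalue
`J - ζ - ζ⁻¹`, so conjugating by the Vandermonde matrix of the `N`-th roots of unity gives
`det = ∏_ζ (J - ζ - ζ⁻¹)`. Writing `J = z + z⁻¹` over `ℂ`, each factor is `z⁻¹ (z - ζ) (z - ζ⁻¹)`,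
and `∏_ζ (z - ζ) = z ^ N - 1` turns the product into `z ^ N + z⁻ᴺ - 2 = 2 T_N(J/2) - 2`.
Positive definiteness comes from the quadratic form `(J - 2) ∑ yᵢ² + ∑ (yᵢ - yᵢ₊₁)²`, and the
Kronecker product with the identity raises the determinant to the `d`-th power.
-/

open Finset

namespace Fin

variable {N : ℕ}

lemma pow_val_add {M : Type*} [Monoid M] {ζ : M} (hζ : ζ ^ N = 1) (a b : Fin N) :
    ζ ^ (a + b : Fin N).val = ζ ^ a.val * ζ ^ b.val := by
  rw [Fin.val_add, ← pow_eq_pow_mod _ hζ, pow_add]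

variable [NeZero N]

lemma pow_val_one {M : Type*} [Monoid M] {ζ : M} (hζ : ζ ^ N = 1) : ζ ^ (1 : Fin N).val = ζ := by
  rw [Fin.val_one', ← pow_eq_pow_mod _ hζ, pow_one]

lemma add_one_ne_self (hN : 2 ≤ N) (i : Fin N) : i + 1 ≠ i := by
  simp only [ne_eq, add_eq_left, Fin.ext_iff, coe_ofNat_eq_mod, Nat.zero_mod,
    Nat.one_mod_eq_zero_iff]
  omega

lemma sub_one_ne_self (hN : 2 ≤ N) (i : Fin N) : i - 1 ≠ i := by
  simp only [ne_eq, sub_eq_self, Fin.ext_iff, coe_ofNat_eq_mod, Nat.zero_mod,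
    Nat.one_mod_eq_zero_iff]
  omega

lemma add_one_ne_sub_one (hN : 3 ≤ N) (i : Fin N) : i + 1 ≠ i - 1 := by
  rw [ne_eq, eq_sub_iff_add_eq, add_assoc, add_eq_left]
  simp only [Fin.ext_iff, Fin.val_add, coe_ofNat_eq_mod, Nat.zero_mod,
    Nat.mod_eq_of_lt (show 1 < N by omega), Nat.mod_eq_of_lt (show 1 + 1 < N by omega)]
  omega

end Fin

lemma IsPrimitiveRoot.prod_sub_pow {R : Type*} [CommRing R] [IsDomain R] {ζ : R} {N : ℕ}
    (hζ : IsPrimitiveRoot ζ N) (hN : 0 < N) (z : R) :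
    ∏ k ∈ range N, (z - ζ ^ k) = z ^ N - 1 := by
  simpa [Polynomial.eval_prod] using
    congrArg (Polynomial.eval z) (X_pow_sub_C_eq_prod hζ hN (one_pow N)).symm

lemma IsPrimitiveRoot.prod_add_inv_sub_pow_sub_inv {K : Type*} [Field K] {ζ : K} {N : ℕ}
    (hζ : IsPrimitiveRoot ζ N) (hN : 0 < N) {z : K} (hz : z ≠ 0) :
    ∏ k ∈ range N, (z + z⁻¹ - ζ ^ k - (ζ ^ k)⁻¹) = z ^ N + z⁻¹ ^ N - 2 := by
  have hζ0 : ζ ≠ 0 := hζ.ne_zero hN.ne'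
  have factor (k : ℕ) : z + z⁻¹ - ζ ^ k - (ζ ^ k)⁻¹ = z⁻¹ * ((z - ζ ^ k) * (z - ζ⁻¹ ^ k)) := by
    rw [inv_pow]
    field_simp
    ring
  rw [prod_congr rfl fun k _ => factor k, prod_mul_distrib, prod_mul_distrib, prod_const,
    card_range, hζ.prod_sub_pow hN, hζ.inv.prod_sub_pow hN, inv_pow]
  field_simp
  ring

lemma two_mul_chebT_eq {x : ℝ} {z : ℂ} (hz : z ≠ 0) (hx : 2 * (x : ℂ) = z + z⁻¹) (n : ℕ) :
    2 * (chebT n x : ℂ) = z ^ n + z⁻¹ ^ n := by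
  induction n using Nat.twoStepInduction with
  | zero => norm_num [chebT]
  | one => simpa [chebT] using hx
  | more n ih0 ih1 =>
    have hzz : z * z⁻¹ = 1 := mul_inv_cancel₀ hz
    simp only [chebT]
    push_cast
    linear_combination (2 * (x : ℂ)) * ih1 + (z ^ (n + 1) + z⁻¹ ^ (n + 1)) * hx - ih0 +
      (z ^ n + z⁻¹ ^ n) * hzz

lemma Complex.exists_add_inv_eq (w : ℂ) : ∃ z : ℂ, z ≠ 0 ∧ z + z⁻¹ = w := by
  obtain ⟨z, hz⟩ :=
    exists_quadratic_eq_zero one_ne_zero (IsAlgClosed.exists_eq_mul_self (discrim 1 (-w) 1))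
  have hz0 : z ≠ 0 := by rintro rfl; norm_num at hz
  refine ⟨z, hz0, ?_⟩
  field_simp
  linear_combination hz

section circMat

variable {N : ℕ} [NeZero N]

lemma circMat_apply_eq (hN : 3 ≤ N) (J : ℝ) (i j : Fin N) :
    circMat N J i j =
      (if j = i then J else 0) - (if j = i + 1 then 1 else 0) - (if j = i - 1 then 1 else 0) := by
  have h1 := Fin.add_one_ne_self (by omega) i
  have h2 := Fin.sub_one_ne_self (by omega) i
  have h3 := Fin.add_one_ne_sub_one hN i
  have h4 : j + 1 = i ↔ j = i - 1 := eq_sub_iff_add_eq.symm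
  simp only [circMat, eq_comm (a := i), h4]
  split_ifs <;> simp_all

lemma circMat_isHermitian (J : ℝ) : (circMat N J).IsHermitian := by
  ext i j
  simp [circMat, eq_comm, or_comm]

lemma circMat_map_mulVec {R : Type*} [Ring R] (hN : 3 ≤ N) (J : ℝ) (f : ℝ →+* R) (v : Fin N → R)
    (i : Fin N) : ((circMat N J).map f *ᵥ v) i = f J * v i - v (i + 1) - v (i - 1) := by
  simp [mulVec, dotProduct, circMat_apply_eq hN, apply_ite f, sub_mul, ite_mul, sum_sub_distrib]

lemma circMat_mulVec (hN : 3 ≤ N) (J : ℝ) (v : Fin N → ℝ) (i : Fin N) :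
    (circMat N J *ᵥ v) i = J * v i - v (i + 1) - v (i - 1) := by
  simpa using circMat_map_mulVec hN J (RingHom.id ℝ) v i

lemma dotProduct_circMat_mulVec (hN : 3 ≤ N) (J : ℝ) (y : Fin N → ℝ) :
    y ⬝ᵥ (circMat N J *ᵥ y) = (J - 2) * ∑ i, y i ^ 2 + ∑ i, (y i - y (i + 1)) ^ 2 := by
  have shift_sq : ∑ i, y (i + 1) ^ 2 = ∑ i, y i ^ 2 :=
    Equiv.sum_comp (Equiv.addRight (1 : Fin N)) (y · ^ 2)
  have shift_mul : ∑ i, y i * y (i - 1) = ∑ i, y i * y (i + 1) := by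
    rw [← Equiv.sum_comp (Equiv.addRight (1 : Fin N))]
    simp [mul_comm]
  simp only [dotProduct, circMat_mulVec hN, mul_sub, sub_sq, sum_sub_distrib, sum_add_distrib,
    mul_left_comm _ J, mul_assoc (2 : ℝ), ← sq, ← mul_sum, shift_sq, shift_mul]
  ring

lemma circMat_posDef (hN : 3 ≤ N) {J : ℝ} (hJ : 2 < J) : (circMat N J).PosDef := by
  refine posDef_iff_dotProduct_mulVec.mpr ⟨circMat_isHermitian J, fun y hy => ?_⟩
  obtain ⟨i, hi⟩ : ∃ i, y i ≠ 0 := Function.ne_iff.mp hy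
  have sq_pos : 0 < ∑ i, y i ^ 2 := sum_pos' (fun _ _ => sq_nonneg _) ⟨i, mem_univ i, by positivity⟩
  have diff_nonneg : 0 ≤ ∑ i, (y i - y (i + 1)) ^ 2 := sum_nonneg fun _ _ => sq_nonneg _
  rw [star_trivial, dotProduct_circMat_mulVec hN]
  nlinarith

lemma circMat_map_mulVec_pow {K : Type*} [Field K] (hN : 3 ≤ N) (J : ℝ) (f : ℝ →+* K) {ζ : K}
    (hζ : ζ ^ N = 1) :
    (circMat N J).map f *ᵥ (fun j : Fin N => ζ ^ (j : ℕ)) =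
      (f J - ζ - ζ⁻¹) • fun j : Fin N => ζ ^ (j : ℕ) := by
  have hζ0 : ζ ≠ 0 := by rintro rfl; simp [NeZero.ne N] at hζ
  ext i
  have succ : ζ ^ (i + 1 : Fin N).val = ζ ^ i.val * ζ := by
    rw [Fin.pow_val_add hζ, Fin.pow_val_one hζ]
  have pred : ζ ^ (i - 1 : Fin N).val = ζ ^ i.val * ζ⁻¹ := by
    have h := Fin.pow_val_add hζ (i - 1) 1
    rw [sub_add_cancel, Fin.pow_val_one hζ] at h
    rw [h, mul_inv_cancel_right₀ hζ0]
  rw [circMat_map_mulVec hN, Pi.smul_apply, smul_eq_mul, succ, pred]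
  ring

lemma circMat_map_mul_vandermonde {K : Type*} [Field K] (hN : 3 ≤ N) (J : ℝ) (f : ℝ →+* K)
    {v : Fin N → K} (hv : ∀ k, v k ^ N = 1) :
    (circMat N J).map f * (vandermonde v)ᵀ =
      (vandermonde v)ᵀ * diagonal fun k => f J - v k - (v k)⁻¹ := by
  ext i k
  rw [mul_diagonal, mul_comm]
  exact congrFun (circMat_map_mulVec_pow hN J f (hv k)) i

lemma circMat_det_map {K : Type*} [Field K] (hN : 3 ≤ N) (J : ℝ) (f : ℝ →+* K) {ω : K}
    (hω : IsPrimitiveRoot ω N) :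
    f (circMat N J).det = ∏ k ∈ range N, (f J - ω ^ k - (ω ^ k)⁻¹) := by
  have hv : ∀ k : Fin N, (ω ^ (k : ℕ)) ^ N = 1 := fun k => by
    rw [← pow_mul, mul_comm, pow_mul, hω.pow_eq_one, one_pow]
  have hV : (vandermonde fun k : Fin N => ω ^ (k : ℕ))ᵀ.det ≠ 0 := by
    rw [det_transpose, det_vandermonde_ne_zero_iff]
    exact fun a b h => Fin.val_injective (hω.pow_inj a.isLt b.isLt h)
  have h := congrArg det (circMat_map_mul_vandermonde hN J f hv)
  rw [det_mul, det_mul, det_diagonal, mul_comm] at h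
  rw [RingHom.map_det, ← Fin.prod_univ_eq_prod_range]
  exact mul_left_cancel₀ hV h

lemma circMat_det (hN : 3 ≤ N) (J : ℝ) :
    (circMat N J).det = 2 * chebT N (J / 2) - 2 := by
  obtain ⟨z, hz, hzJ⟩ := Complex.exists_add_inv_eq J
  have hω := Complex.isPrimitiveRoot_exp N (NeZero.ne N)
  have hT := two_mul_chebT_eq (x := J / 2) hz (by push_cast; rw [hzJ]; ring) N
  apply Complex.ofReal_injective
  calc ((circMat N J).det : ℂ) = Complex.ofRealHom (circMat N J).det := rfl
    _ = ∏ k ∈ range N, (z + z⁻¹ - _ ^ k - (_ ^ k)⁻¹) := by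
      rw [circMat_det_map hN J _ hω, Complex.ofRealHom_eq_coe, hzJ]
    _ = z ^ N + z⁻¹ ^ N - 2 := hω.prod_add_inv_sub_pow_sub_inv (NeZero.pos N) hz
    _ = _ := by push_cast; rw [hT]

end circMat

theorem kronecker_circulant_posDef_det_general
    (N d : ℕ) [NeZero N] (hN : 3 ≤ N) (J : ℝ) (hJ : 2 < J) :
    (circMat N J ⊗ₖ (1 : Matrix (Fin d) (Fin d) ℝ)).PosDef ∧
    (circMat N J ⊗ₖ (1 : Matrix (Fin d) (Fin d) ℝ)).det
      = (2 * chebT N (J / 2) - 2) ^ d := by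
  refine ⟨(circMat_posDef hN hJ).kronecker PosDef.one, ?_⟩
  rw [det_kronecker, circMat_det hN, det_one, one_pow, mul_one, Fintype.card_fin]

theorem kronecker_circulant_posDef_det
    (N d : ℕ) [NeZero N] (hN : 3 ≤ N) (hd : 1 ≤ d) (J : ℝ) (hJ : 2 < J) :
    (circMat N J ⊗ₖ (1 : Matrix (Fin d) (Fin d) ℝ)).PosDef ∧
    (circMat N J ⊗ₖ (1 : Matrix (Fin d) (Fin d) ℝ)).det
      = (2 * chebT N (J / 2) - 2) ^ d :=
  kronecker_circulant_posDef_det_general N d hN J hJ
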